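/- For a finite DAG G and distinct vertices X, Y, the number of minimal vertex sets (with respect to inclusion) that d-separate X and Y in the graph with edges out of X removed is finite, and the CAVS enumeration (iterating over subsets of the vertices lying on X–Y paths in increasing size and retaining only non-supersets) produces exactly the collection of all such minimal sets. -/
import Mathlib


variable {V : Type*}

/-- A directed graph is acyclic if it has no nonempty directed cycle. -/
def Acyclic (E : V → V → Prop) : Prop := ∀ v, ¬ Relation.TransGen E v v

/-- A (not necessarily directed) path between `X` and `Y` in the directed graph `E`:
a sequence of distinct vertices in which consecutive vertices are adjacent. -/
structure UPath (E : V → V → Prop) (X Y : V) where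
  n : ℕ
  f : ℕ → V
  hpos : 0 < n
  hstart : f 0 = X
  hend : f n = Y
  hinj : ∀ i j, i ≤ n → j ≤ n → f i = f j → i = j
  hadj : ∀ i, i < n → E (f i) (f (i + 1)) ∨ E (f (i + 1)) (f i)

/-- The interior vertex at position `i` of the path is a collider (both path edges point into it). -/
def ColliderAt (E : V → V → Prop) {X Y : V} (p : UPath E X Y) (i : ℕ) : Prop :=
  E (p.f (i - 1)) (p.f i) ∧ E (p.f (i + 1)) (p.f i)

/-- A path is blocked by `Z` if some interior vertex is a non-collider in `Z`,
or a collider having no descendant in `Z`. -/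
def Blocks (E : V → V → Prop) {X Y : V} (Z : Set V) (p : UPath E X Y) : Prop :=
  ∃ i, 0 < i ∧ i < p.n ∧
    ((¬ ColliderAt E p i ∧ p.f i ∈ Z) ∨
     (ColliderAt E p i ∧ ∀ z ∈ Z, ¬ Relation.ReflTransGen E (p.f i) z))

/-- `Z` d-separates `X` and `Y`: every path between them is blocked by `Z`. -/
def DSep (E : V → V → Prop) (X Y : V) (Z : Set V) : Prop :=
  ∀ p : UPath E X Y, Blocks E Z p

/-- The graph obtained from `E` by deleting all edges out of `X`. -/
def DelOut (E : V → V → Prop) (X : V) : V → V → Prop :=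
  fun a b => E a b ∧ a ≠ X

/-- The back-door criterion for `Z` relative to `(X, Y)`:
(1) no element of `Z` is a descendant of `X`;
(2) `Z` d-separates `X` and `Y` in the graph with all edges out of `X` removed. -/
def Backdoor (E : V → V → Prop) (X Y : V) (Z : Set V) : Prop :=
  (∀ z ∈ Z, ¬ Relation.TransGen E X z) ∧ DSep (DelOut E X) X Y Z

/-- Intersecting a d-separating set with the set of path vertices preserves d-separation. -/
theorem dsep_inter_paths (E : V → V → Prop) (X Y : V) (Z : Set V)
    (h : DSep E X Y Z) :
    DSep E X Y (Z ∩ {v | ∃ p : UPath E X Y, ∃ i ≤ p.n, p.f i = v}) := by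
  intro p
  obtain ⟨i, hi0, hin, hcase⟩ := h p
  refine ⟨i, hi0, hin, ?_⟩
  rcases hcase with ⟨hnc, hz⟩ | ⟨hc, hz⟩
  · exact Or.inl ⟨hnc, hz, ⟨p, i, le_of_lt hin, rfl⟩⟩
  · exact Or.inr ⟨hc, fun z hz' => hz z hz'.1⟩

/-- For a finite DAG `G` and distinct `X`, `Y`, the collection of minimal sets
d-separating `X` and `Y` in the graph with edges out of `X` removed is finite, and the CAVS
enumeration (subsets of the vertices lying on `X`–`Y` paths, retaining the inclusion-minimal
d-separating ones) produces exactly this collection. -/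

theorem stmt19 [Fintype V] (E : V → V → Prop) (hacyc : Acyclic E) (X Y : V) (hXY : X ≠ Y) :
    {Z : Set V | DSep (DelOut E X) X Y Z ∧ ∀ Z' ⊂ Z, ¬ DSep (DelOut E X) X Y Z'}.Finite ∧
    (∀ Z : Set V,
      (Z ⊆ {v | ∃ p : UPath (DelOut E X) X Y, ∃ i ≤ p.n, p.f i = v} ∧
        DSep (DelOut E X) X Y Z ∧
        ∀ Z' ⊆ {v | ∃ p : UPath (DelOut E X) X Y, ∃ i ≤ p.n, p.f i = v},
          Z' ⊂ Z → ¬ DSep (DelOut E X) X Y Z') ↔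
      (DSep (DelOut E X) X Y Z ∧ ∀ Z' ⊂ Z, ¬ DSep (DelOut E X) X Y Z')) := by
  constructor
  · exact Set.toFinite _
  · intro Z
    set P := {v | ∃ p : UPath (DelOut E X) X Y, ∃ i ≤ p.n, p.f i = v} with hP
    constructor
    · rintro ⟨hZP, hd, hmin⟩
      refine ⟨hd, fun Z' hZ' hd' => ?_⟩
      have hd'' := dsep_inter_paths (DelOut E X) X Y Z' hd'
      apply hmin (Z' ∩ P) Set.inter_subset_right _ hd''
      constructor
      · exact Set.inter_subset_left.trans hZ'.subset
      · intro hsub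
        obtain ⟨x, hxZ, hxZ'⟩ := Set.exists_of_ssubset hZ'
        exact hxZ' (hsub hxZ).1
    · rintro ⟨hd, hmin⟩
      have hZP : Z ⊆ P := by
        by_contra hns
        have hd'' := dsep_inter_paths (DelOut E X) X Y Z hd
        apply hmin (Z ∩ P) _ hd''
        constructor
        · exact Set.inter_subset_left
        · intro hsub
          obtain ⟨x, hxZ, hxP⟩ := Set.not_subset.mp hns
          exact hxP (hsub hxZ).2
      exact ⟨hZP, hd, fun Z' _ h' => hmin Z' h'⟩
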